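/- Let U, X₁ⁿ, X₂ⁿ be jointly distributed random variables with U taking values in a finite set and each Xᵢⁿ = (X_{i,1},…,X_{i,n}) taking values in a finite product alphabet. Fix ε, δ > 0. If I(X₁ⁿ; X₂ⁿ | U) ≤ nδ, then there exists a set T ⊆ {1,…,n} with |T| ≤ nδ/ε such that for every t ∉ T, I(X_{1,t}; X_{2,t} | U, X₁^T, X₂^T) ≤ ε, where X_i^T denotes the tuple (X_{i,t})_{t∈T}. -/

import Mathlib

/-!
Minimise the potential `Φ(T) = I(X₁ⁿ; X₂ⁿ | U, X₁^T, X₂^T) + ε |T|` over `T ⊆ {1,…,n}`.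
Conditioning on a function of `A` and of `B` can only lose information, and the loss is at
least what those functions share: `I(f A; g B | C) + I(A; B | f A, g B, C) ≤ I(A; B | C)` by the
chain rule and nonnegativity. With `f, g` the `t`-th coordinates this gives
`Φ(T ∪ {t}) ≤ Φ(T) - I(X_{1,t}; X_{2,t} | U, X₁^T, X₂^T) + ε`, so a minimiser `T` of `Φ` has every
remaining coordinate term at most `ε`, while `ε |T| ≤ Φ(T) ≤ Φ(∅) = I(X₁ⁿ; X₂ⁿ | U) ≤ n δ`.
-/

open scoped BigOperators Classical

/-- Probability that the random variable `A` takes the value `a`, under the pmf `p`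
on a finite sample space `Ω`. -/
noncomputable def prOf {Ω α : Type*} [Fintype Ω] (p : Ω → ℝ) (A : Ω → α) (a : α) : ℝ :=
  ∑ ω, if A ω = a then p ω else 0

/-- `p` is a probability mass function on the finite type `Ω`. -/
def IsPmf {Ω : Type*} [Fintype Ω] (p : Ω → ℝ) : Prop :=
  (∀ ω, 0 ≤ p ω) ∧ ∑ ω, p ω = 1

/-- Mutual information `I(A;B)` (base-2 logarithm) of random variables `A, B`
on a finite probability space `(Ω, p)`. -/
noncomputable def mutualInfo {Ω α β : Type*} [Fintype Ω] [Fintype α] [Fintype β]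
    (p : Ω → ℝ) (A : Ω → α) (B : Ω → β) : ℝ :=
  ∑ a, ∑ b, prOf p (fun ω => (A ω, B ω)) (a, b) *
    Real.logb 2 (prOf p (fun ω => (A ω, B ω)) (a, b) / (prOf p A a * prOf p B b))

/-- Conditional mutual information `I(A;B|C)` (base-2 logarithm). -/
noncomputable def condMutualInfo {Ω α β γ : Type*} [Fintype Ω] [Fintype α] [Fintype β]
    [Fintype γ] (p : Ω → ℝ) (A : Ω → α) (B : Ω → β) (C : Ω → γ) : ℝ :=
  ∑ a, ∑ b, ∑ c, prOf p (fun ω => (A ω, B ω, C ω)) (a, b, c) *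
    Real.logb 2 (prOf p (fun ω => (A ω, B ω, C ω)) (a, b, c) * prOf p C c /
      (prOf p (fun ω => (A ω, C ω)) (a, c) * prOf p (fun ω => (B ω, C ω)) (b, c)))

section Prob

variable {Ω α β : Type*} [Fintype Ω] (p : Ω → ℝ)

theorem prOf_congr {A : Ω → α} {B : Ω → β} {a : α} {b : β}
    (h : ∀ ω, A ω = a ↔ B ω = b) : prOf p A a = prOf p B b :=
  Finset.sum_congr rfl fun ω _ => if_congr (h ω) rfl rfl

theorem prOf_apply_congr {A : Ω → α} {B : Ω → β} (h : ∀ ω ω', A ω = A ω' ↔ B ω = B ω') (ω : Ω) :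
    prOf p A (A ω) = prOf p B (B ω) :=
  prOf_congr p fun ω' => h ω' ω

theorem prOf_nonneg (hp : ∀ ω, 0 ≤ p ω) (A : Ω → α) (a : α) : 0 ≤ prOf p A a :=
  Finset.sum_nonneg fun ω _ => by split_ifs <;> simp [hp ω]

theorem prOf_mono (hp : ∀ ω, 0 ≤ p ω) {A : Ω → α} {B : Ω → β} {a : α} {b : β}
    (h : ∀ ω, A ω = a → B ω = b) : prOf p A a ≤ prOf p B b :=
  Finset.sum_le_sum fun ω _ => by
    by_cases hA : A ω = a
    · simp [hA, h ω hA]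
    · simp only [hA, if_false]; split_ifs <;> simp [hp ω]

theorem prOf_apply_pos (hp : ∀ ω, 0 ≤ p ω) (A : Ω → α) {ω : Ω} (hω : 0 < p ω) :
    0 < prOf p A (A ω) :=
  hω.trans_le <| by
    simpa [prOf] using Finset.single_le_sum (f := fun ω' => if A ω' = A ω then p ω' else 0)
      (fun ω' _ => by split_ifs <;> simp [hp ω']) (Finset.mem_univ ω)

theorem prOf_apply_ne_zero (hp : ∀ ω, 0 ≤ p ω) {ω : Ω} (hω : 0 < p ω) (A : Ω → α) :
    prOf p A (A ω) ≠ 0 :=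
  (prOf_apply_pos p hp A hω).ne'

theorem sum_prOf_mul [Fintype α] (A : Ω → α) (F : α → ℝ) :
    ∑ a, prOf p A a * F a = ∑ ω, p ω * F (A ω) := by
  simp only [prOf, Finset.sum_mul, ite_mul, zero_mul]
  rw [Finset.sum_comm]
  simp

theorem sum_prOf [Fintype α] (A : Ω → α) : ∑ a, prOf p A a = ∑ ω, p ω := by
  simpa using sum_prOf_mul p A 1

theorem sum_prOf_fst [Fintype α] (A : Ω → α) (B : Ω → β) (b : β) :
    ∑ a, prOf p (fun ω => (A ω, B ω)) (a, b) = prOf p B b := by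
  simp only [prOf]
  rw [Finset.sum_comm]
  simp [Prod.ext_iff, ite_and]

end Prob

theorem sub_le_mul_log_div {f g : ℝ} (hf : 0 ≤ f) (hg : 0 ≤ g) (hfg : 0 < f → 0 < g) :
    f - g ≤ f * Real.log (f / g) := by
  rcases hf.eq_or_lt with rfl | hf
  · simpa using hg
  have hlog := Real.one_sub_inv_le_log_of_pos (div_pos hf (hfg hf))
  rw [inv_div] at hlog
  calc f - g = f * (1 - g / f) := by field_simp
    _ ≤ f * Real.log (f / g) := mul_le_mul_of_nonneg_left hlog hf.le

theorem sum_mul_logb_div_nonneg {ι : Type*} (s : Finset ι) {b : ℝ} (hb : 1 < b) {f g : ι → ℝ}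
    (hf : ∀ i, 0 ≤ f i) (hg : ∀ i, 0 ≤ g i) (hfg : ∀ i, 0 < f i → 0 < g i)
    (hsum : ∑ i ∈ s, g i ≤ ∑ i ∈ s, f i) :
    0 ≤ ∑ i ∈ s, f i * Real.logb b (f i / g i) := by
  have hlog : 0 ≤ ∑ i ∈ s, f i * Real.log (f i / g i) :=
    calc (0 : ℝ) ≤ ∑ i ∈ s, (f i - g i) := by rw [Finset.sum_sub_distrib]; linarith
      _ ≤ _ := Finset.sum_le_sum fun i _ => sub_le_mul_log_div (hf i) (hg i) (hfg i)
  simp only [Real.logb, ← mul_div_assoc, ← Finset.sum_div]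
  exact div_nonneg hlog (Real.log_nonneg hb.le)

section CondMutualInfo

variable {Ω α α' β β' γ : Type*} [Fintype Ω] [Fintype α] [Fintype α'] [Fintype β] [Fintype β']
  [Fintype γ] (p : Ω → ℝ)

theorem sum_prOf_mul_prOf_div_prOf (A : Ω → α) (B : Ω → β) (C : Ω → γ) :
    ∑ a, ∑ b, ∑ c, prOf p (fun ω => (A ω, C ω)) (a, c) * prOf p (fun ω => (B ω, C ω)) (b, c) /
      prOf p C c = ∑ ω, p ω := by
  rw [← sum_prOf p C, Finset.sum_congr rfl fun a _ => Finset.sum_comm, Finset.sum_comm]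
  refine Finset.sum_congr rfl fun c _ => ?_
  simp_rw [← Finset.sum_div, ← Finset.sum_mul_sum]
  rw [sum_prOf_fst, sum_prOf_fst, mul_self_div_self]

theorem condMutualInfo_nonneg (hp : ∀ ω, 0 ≤ p ω) (A : Ω → α) (B : Ω → β) (C : Ω → γ) :
    0 ≤ condMutualInfo p A B C := by
  set P : α × β × γ → ℝ := prOf p fun ω => (A ω, B ω, C ω)
  set Q : α × β × γ → ℝ := fun x => prOf p (fun ω => (A ω, C ω)) (x.1, x.2.2) *
    prOf p (fun ω => (B ω, C ω)) (x.2.1, x.2.2) / prOf p C x.2.2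
  have hPQ : ∀ x, 0 < P x → 0 < Q x := fun x hx => by
    refine div_pos (mul_pos ?_ ?_) ?_ <;>
      exact hx.trans_le (prOf_mono p hp fun ω h => by subst h; rfl)
  have hsum : ∑ x, Q x ≤ ∑ x, P x := by
    simp only [Q, P, sum_prOf, Fintype.sum_prod_type, sum_prOf_mul_prOf_div_prOf, le_refl]
  have := sum_mul_logb_div_nonneg Finset.univ one_lt_two (prOf_nonneg p hp _)
    (fun x => div_nonneg (mul_nonneg (prOf_nonneg p hp _ _) (prOf_nonneg p hp _ _))
      (prOf_nonneg p hp _ _)) hPQ hsum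
  rw [condMutualInfo]
  simpa only [Fintype.sum_prod_type, div_div_eq_mul_div] using this

theorem condMutualInfo_eq_sum_logb (A : Ω → α) (B : Ω → β) (C : Ω → γ) :
    condMutualInfo p A B C = ∑ ω, p ω *
      Real.logb 2 (prOf p (fun ω => (A ω, B ω, C ω)) (A ω, B ω, C ω) * prOf p C (C ω) /
        (prOf p (fun ω => (A ω, C ω)) (A ω, C ω) * prOf p (fun ω => (B ω, C ω)) (B ω, C ω))) := by
  rw [condMutualInfo, ← sum_prOf_mul p (fun ω => (A ω, B ω, C ω)) fun x =>
    Real.logb 2 (prOf p (fun ω => (A ω, B ω, C ω)) x * prOf p C x.2.2 /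
      (prOf p (fun ω => (A ω, C ω)) (x.1, x.2.2) * prOf p (fun ω => (B ω, C ω)) (x.2.1, x.2.2)))]
  simp only [Fintype.sum_prod_type]

theorem condMutualInfo_congr {γ' : Type*} [Fintype γ']
    {A : Ω → α} {A' : Ω → α'} {B : Ω → β} {B' : Ω → β'} {C : Ω → γ} {C' : Ω → γ'}
    (hA : ∀ ω ω', A ω = A ω' ↔ A' ω = A' ω') (hB : ∀ ω ω', B ω = B ω' ↔ B' ω = B' ω')
    (hC : ∀ ω ω', C ω = C ω' ↔ C' ω = C' ω') :
    condMutualInfo p A B C = condMutualInfo p A' B' C' := by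
  simp only [condMutualInfo_eq_sum_logb]
  refine Finset.sum_congr rfl fun ω _ => ?_
  congr 4 <;> exact prOf_apply_congr p (fun ω ω' => by simp only [Prod.ext_iff, hA, hB, hC]) ω

theorem condMutualInfo_comm (A : Ω → α) (B : Ω → β) (C : Ω → γ) :
    condMutualInfo p A B C = condMutualInfo p B A C := by
  simp only [condMutualInfo_eq_sum_logb]
  refine Finset.sum_congr rfl fun ω _ => ?_
  rw [mul_comm (prOf p (fun ω => (A ω, C ω)) _), prOf_apply_congr p
    (B := fun ω => (B ω, A ω, C ω)) (fun ω ω' => by simp only [Prod.ext_iff]; tauto) ω]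

theorem condMutualInfo_prod_right_eq_add (hp : ∀ ω, 0 ≤ p ω)
    (A : Ω → α) (B : Ω → β) (B' : Ω → β') (C : Ω → γ) :
    condMutualInfo p A (fun ω => (B ω, B' ω)) C
      = condMutualInfo p A B' C + condMutualInfo p A B (fun ω => (B' ω, C ω)) := by
  simp only [condMutualInfo_eq_sum_logb, ← Finset.sum_add_distrib, ← mul_add]
  refine Finset.sum_congr rfl fun ω _ => ?_
  rcases (hp ω).eq_or_lt with hω | hω
  · simp [← hω]
  rw [prOf_apply_congr p (B := fun ω => (A ω, B ω, B' ω, C ω))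
      (fun ω ω' => by simp only [Prod.ext_iff, and_assoc]) ω,
    prOf_apply_congr p (A := fun ω => ((B ω, B' ω), C ω)) (B := fun ω => (B ω, B' ω, C ω))
      (fun ω ω' => by simp only [Prod.ext_iff, and_assoc]) ω]
  simp only [Real.logb_div, Real.logb_mul, mul_ne_zero_iff, prOf_apply_ne_zero p hp hω,
    ne_eq, not_false_eq_true, and_self]
  ring

section DataProcessing

variable (hp : ∀ ω, 0 ≤ p ω)
include hp

theorem condMutualInfo_eq_comp_right_add (A : Ω → α) (B : Ω → β) (C : Ω → γ) (g : β → β') :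
    condMutualInfo p A B C
      = condMutualInfo p A (fun ω => g (B ω)) C
        + condMutualInfo p A B (fun ω => (g (B ω), C ω)) := by
  rw [← condMutualInfo_prod_right_eq_add p hp]
  exact condMutualInfo_congr p (fun _ _ => Iff.rfl)
    (fun ω ω' => by simp +contextual [Prod.ext_iff]) (fun _ _ => Iff.rfl)

theorem condMutualInfo_eq_comp_left_add (A : Ω → α) (B : Ω → β) (C : Ω → γ) (f : α → α') :
    condMutualInfo p A B C
      = condMutualInfo p (fun ω => f (A ω)) B C
        + condMutualInfo p A B (fun ω => (f (A ω), C ω)) := by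
  rw [condMutualInfo_comm, condMutualInfo_eq_comp_right_add p hp B A C f,
    condMutualInfo_comm p B, condMutualInfo_comm p B]

theorem condMutualInfo_comp_add_le (A : Ω → α) (B : Ω → β) (C : Ω → γ)
    (f : α → α') (g : β → β') :
    condMutualInfo p (fun ω => f (A ω)) (fun ω => g (B ω)) C
      + condMutualInfo p A B (fun ω => (f (A ω), g (B ω), C ω))
      ≤ condMutualInfo p A B C := by
  have hB := condMutualInfo_eq_comp_right_add p hp A B C g
  have hA₁ := condMutualInfo_eq_comp_left_add p hp A (fun ω => g (B ω)) C f
  have hA₂ := condMutualInfo_eq_comp_left_add p hp A B (fun ω => (g (B ω), C ω)) f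
  have := condMutualInfo_nonneg p hp A (fun ω => g (B ω)) (fun ω => (f (A ω), C ω))
  have := condMutualInfo_nonneg p hp (fun ω => f (A ω)) B (fun ω => (g (B ω), C ω))
  linarith

end DataProcessing

end CondMutualInfo

theorem condMutualInfo_restrict_insert_add_le {Ω ι 𝒰 𝒳₁ 𝒳₂ : Type*} [Fintype Ω] [Fintype ι]
    [DecidableEq ι] [Fintype 𝒰] [Fintype 𝒳₁] [Fintype 𝒳₂] (p : Ω → ℝ) (hp : ∀ ω, 0 ≤ p ω)
    (U : Ω → 𝒰) (X₁ : Ω → ι → 𝒳₁) (X₂ : Ω → ι → 𝒳₂) (T : Finset ι) (t : ι) :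
    condMutualInfo p (fun ω => X₁ ω t) (fun ω => X₂ ω t)
        (fun ω => (U ω, fun s : T => X₁ ω s, fun s : T => X₂ ω s))
      + condMutualInfo p X₁ X₂
        (fun ω => (U ω, fun s : (insert t T : Finset ι) => X₁ ω s,
          fun s : (insert t T : Finset ι) => X₂ ω s))
      ≤ condMutualInfo p X₁ X₂ (fun ω => (U ω, fun s : T => X₁ ω s, fun s : T => X₂ ω s)) := by
  convert condMutualInfo_comp_add_le p hp X₁ X₂ _ (fun x => x t) (fun x => x t) using 2
  refine condMutualInfo_congr p (fun _ _ => Iff.rfl) (fun _ _ => Iff.rfl) fun ω ω' => ?_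
  simp only [Prod.ext_iff, funext_iff, Subtype.forall, Finset.mem_insert, forall_eq_or_imp]
  tauto

theorem dueck_wringing_general {Ω 𝒰 𝒳₁ 𝒳₂ : Type*} [Fintype Ω] [Fintype 𝒰] [Fintype 𝒳₁]
    [Fintype 𝒳₂] (n : ℕ) (p : Ω → ℝ) (hp : IsPmf p)
    (U : Ω → 𝒰) (X₁ : Ω → Fin n → 𝒳₁) (X₂ : Ω → Fin n → 𝒳₂)
    (ε δ : ℝ) (hε : 0 < ε)
    (h : condMutualInfo p X₁ X₂ U ≤ n * δ) :
    ∃ T : Finset (Fin n), (T.card : ℝ) ≤ n * δ / ε ∧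
      ∀ t ∉ T, condMutualInfo p (fun ω => X₁ ω t) (fun ω => X₂ ω t)
        (fun ω => (U ω, fun s : T => X₁ ω s, fun s : T => X₂ ω s)) ≤ ε := by
  set J : Finset (Fin n) → ℝ := fun T =>
    condMutualInfo p X₁ X₂ (fun ω => (U ω, fun s : T => X₁ ω s, fun s : T => X₂ ω s))
  obtain ⟨T, -, hT⟩ := Finset.exists_min_image Finset.univ (fun T => J T + ε * T.card)
    Finset.univ_nonempty
  have hJ_empty : J ∅ = condMutualInfo p X₁ X₂ U :=
    condMutualInfo_congr p (fun _ _ => Iff.rfl) (fun _ _ => Iff.rfl) fun ω ω' => by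
      simp [Prod.ext_iff, funext_iff]
  refine ⟨T, ?_, fun t ht => ?_⟩
  · have hmin := hT ∅ (Finset.mem_univ _)
    have := condMutualInfo_nonneg p hp.1 X₁ X₂
      (fun ω => (U ω, fun s : T => X₁ ω s, fun s : T => X₂ ω s))
    rw [le_div_iff₀ hε]
    simp only [Finset.card_empty, Nat.cast_zero, mul_zero, add_zero, hJ_empty] at hmin
    linarith
  · have hmin := hT (insert t T) (Finset.mem_univ _)
    have := condMutualInfo_restrict_insert_add_le p hp.1 U X₁ X₂ T t
    simp only [Finset.card_insert_of_notMem ht, Nat.cast_succ] at hmin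
    linarith

/-- Dueck's wringing lemma: if `I(X₁ⁿ;X₂ⁿ|U) ≤ nδ` then there is a set `T` of at most
`nδ/ε` coordinates such that conditioning additionally on `(X₁^T, X₂^T)` makes every
remaining per-coordinate conditional mutual information at most `ε`. -/
theorem dueck_wringing {Ω 𝒰 𝒳₁ 𝒳₂ : Type*} [Fintype Ω] [Fintype 𝒰] [Fintype 𝒳₁]
    [Fintype 𝒳₂] (n : ℕ) (hn : 1 ≤ n) (p : Ω → ℝ) (hp : IsPmf p)
    (U : Ω → 𝒰) (X₁ : Ω → Fin n → 𝒳₁) (X₂ : Ω → Fin n → 𝒳₂)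
    (ε δ : ℝ) (hε : 0 < ε) (hδ : 0 < δ)
    (h : condMutualInfo p X₁ X₂ U ≤ n * δ) :
    ∃ T : Finset (Fin n), (T.card : ℝ) ≤ n * δ / ε ∧
      ∀ t ∉ T, condMutualInfo p (fun ω => X₁ ω t) (fun ω => X₂ ω t)
        (fun ω => (U ω, fun s : T => X₁ ω s, fun s : T => X₂ ω s)) ≤ ε :=
  dueck_wringing_general n p hp U X₁ X₂ ε δ hε h
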